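/- arXiv:1506.01582 — 8 statements merged into one kernel-verified Lean document; each statement's English description precedes it below -/
import Mathlib

section
/- Let A : ℓ¹(ℕ) → Y be a bounded linear operator whose range is not closed (ill-posedness). Suppose A satisfies the restricted injectivity property with constants γ_n, i.e., ‖Ax‖ ≥ γ_n⁻¹‖x‖₁ for all x with |supp x| ≤ n. Then the sequence (γ_n) is unbounded, i.e., γ_n → ∞ as n → ∞. -/
/-!
If the constants `γ n` stayed below some `b` along a subsequence, then, since `SuppLe x n` is
monotone in `n`, every finitely supported `x` would satisfy `‖A x‖ ≥ b⁻¹ ‖x‖`. The truncations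
of an arbitrary `x ∈ ℓ¹` converge to it, so by continuity this lower bound holds on all of `ℓ¹`;
`A` is then antilipschitz, and the range of an antilipschitz map on a complete space is closed.
-/

open Filter

noncomputable section

abbrev L1 : Type := lp (fun _ : ℕ => ℝ) 1

def SuppLe (x : L1) (n : ℕ) : Prop :=
  ∃ s : Finset ℕ, s.card ≤ n ∧ ∀ k ∉ s, (x : ℕ → ℝ) k = 0

theorem SuppLe.mono {x : L1} {m n : ℕ} (hx : SuppLe x m) (hmn : m ≤ n) : SuppLe x n :=
  let ⟨s, hs, hzero⟩ := hx
  ⟨s, hs.trans hmn, hzero⟩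

theorem suppLe_sum_range_single (x : L1) (n : ℕ) :
    SuppLe (∑ i ∈ Finset.range n, lp.single 1 i ((x : ℕ → ℝ) i)) n := by
  refine ⟨Finset.range n, (Finset.card_range n).le, fun k hk => ?_⟩
  rw [lp.coeFn_sum, Finset.sum_apply]
  exact Finset.sum_eq_zero fun i hi => lp.single_apply_ne 1 i _ fun hki => hk (hki ▸ hi)

theorem le_norm_map_of_forall_suppLe {Y : Type*} [SeminormedAddCommGroup Y] [NormedSpace ℝ Y]
    (A : L1 →L[ℝ] Y) {c : ℝ} (hA : ∀ n, ∀ x : L1, SuppLe x n → c * ‖x‖ ≤ ‖A x‖) (x : L1) :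
    c * ‖x‖ ≤ ‖A x‖ := by
  have htrunc := (lp.hasSum_single ENNReal.one_ne_top x).tendsto_sum_nat
  exact le_of_tendsto_of_tendsto' (htrunc.norm.const_mul c)
    ((A.continuous.tendsto x).comp htrunc).norm
    fun n => hA n _ (suppLe_sum_range_single x n)

theorem ContinuousLinearMap.isClosed_range_of_mul_norm_le {E F : Type*}
    [NormedAddCommGroup E] [NormedSpace ℝ E] [CompleteSpace E]
    [NormedAddCommGroup F] [NormedSpace ℝ F]
    (A : E →L[ℝ] F) {c : ℝ} (hc : 0 < c) (hA : ∀ x, c * ‖x‖ ≤ ‖A x‖) :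
    IsClosed (Set.range A) := by
  have hanti : AntilipschitzWith c⁻¹.toNNReal A := by
    refine A.antilipschitz_of_bound fun x => ?_
    rw [Real.coe_toNNReal _ (inv_nonneg.mpr hc.le), inv_mul_eq_div, le_div_iff₀' hc]
    exact hA x
  exact hanti.isClosed_range A.uniformContinuous

theorem stmt2_general {Y : Type*} [NormedAddCommGroup Y] [NormedSpace ℝ Y]
    (A : L1 →L[ℝ] Y) (hrange : ¬ IsClosed (Set.range A))
    (γ : ℕ → ℝ) (hγpos : ∀ n, 0 < γ n)
    (hRIP : ∀ n, ∀ x : L1, SuppLe x n → ‖A x‖ ≥ (γ n)⁻¹ * ‖x‖) :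
    Tendsto γ atTop atTop := by
  by_contra hγ
  obtain ⟨b, hb⟩ : ∃ b, ∀ m, ∃ n ≥ m, γ n < b := by
    simpa only [tendsto_atTop, not_forall, not_eventually, not_le, frequently_atTop] using hγ
  have hb0 : 0 < b := by
    obtain ⟨n, -, hn⟩ := hb 0
    exact (hγpos n).trans hn
  have hfinite : ∀ m, ∀ x : L1, SuppLe x m → b⁻¹ * ‖x‖ ≤ ‖A x‖ := by
    intro m x hx
    obtain ⟨n, hmn, hn⟩ := hb m
    calc b⁻¹ * ‖x‖ ≤ (γ n)⁻¹ * ‖x‖ := by gcongr; exact hγpos n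
      _ ≤ ‖A x‖ := hRIP n x (hx.mono hmn)
  exact hrange <| A.isClosed_range_of_mul_norm_le (inv_pos.mpr hb0)
    (le_norm_map_of_forall_suppLe A hfinite)

/-- If `A` has non-closed range (ill-posedness) and satisfies the restricted
injectivity property with constants `γ n`, then `γ n → ∞`. -/
theorem stmt2 {Y : Type*} [NormedAddCommGroup Y] [NormedSpace ℝ Y] [CompleteSpace Y]
    (A : L1 →L[ℝ] Y) (hrange : ¬ IsClosed (Set.range A))
    (γ : ℕ → ℝ) (hγpos : ∀ n, 0 < γ n)
    (hRIP : ∀ n, ∀ x : L1, SuppLe x n → ‖A x‖ ≥ (γ n)⁻¹ * ‖x‖) :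
    Tendsto γ atTop atTop :=
  stmt2_general A hrange γ hγpos hRIP
end
end

section
/- Let A : ℓ¹(ℕ) → Y be bounded linear, Y a Banach space, and suppose for some n and all ξ ∈ ℓ^∞(ℕ) with |supp ξ| ≤ n and entries in {-1,0,1}, there exists η ∈ Y* with ‖η‖ ≤ γ_n and P_{supp ξ} A* η = ξ (items (i) and (ii) of the source condition with M_n = all index sets of cardinality ≤ n). Then ‖Ax‖ ≥ γ_n⁻¹‖x‖₁ for all x ∈ ℓ¹(ℕ) with |supp x| ≤ n. -/
/-! Choose `ξ = sgn x`. Evaluated on `A x = ∑ₖ xₖ A e⁽ᵏ⁾`, the certificate `η` for `ξ` gives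
`η (A x) = ∑ₖ xₖ sgn xₖ = ‖x‖₁`, while `|η (A x)| ≤ ‖η‖ ‖A x‖ ≤ γ ‖A x‖`. -/

noncomputable section

def e (k : ℕ) : L1 := lp.single 1 k 1

/-- A sign sequence: entries in {-1,0,1} with at most `n` nonzero entries. -/
def SignSeqLe (ξ : ℕ → ℝ) (n : ℕ) : Prop :=
  (∀ k, ξ k = -1 ∨ ξ k = 0 ∨ ξ k = 1) ∧
    ∃ s : Finset ℕ, s.card ≤ n ∧ ∀ k ∉ s, ξ k = 0

theorem L1.hasSum_mul_apply_e (f : StrongDual ℝ L1) (x : L1) :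
    HasSum (fun k => (x : ℕ → ℝ) k * f (e k)) (f x) := by
  have hx := (lp.hasSum_single ENNReal.one_ne_top x).mapL f
  refine hx.congr_fun fun k => ?_
  rw [e, ← smul_eq_mul, ← map_smul, ← lp.single_smul, smul_eq_mul, mul_one]

theorem L1.hasSum_abs (x : L1) : HasSum (fun k => |(x : ℕ → ℝ) k|) ‖x‖ := by
  simpa using lp.hasSum_norm (by simp) x

theorem L1.apply_eq_norm_of_apply_e_eq_sign (f : StrongDual ℝ L1) (x : L1)
    (hf : ∀ k, (x : ℕ → ℝ) k ≠ 0 → f (e k) = Real.sign ((x : ℕ → ℝ) k)) : f x = ‖x‖ := by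
  refine (L1.hasSum_mul_apply_e f x).unique ((L1.hasSum_abs x).congr_fun fun k => ?_)
  rcases lt_trichotomy ((x : ℕ → ℝ) k) 0 with hneg | hzero | hpos
  · rw [hf k hneg.ne, Real.sign_of_neg hneg, abs_of_neg hneg, mul_neg_one]
  · rw [hzero, abs_zero, zero_mul]
  · rw [hf k hpos.ne', Real.sign_of_pos hpos, abs_of_pos hpos, mul_one]

theorem SuppLe.signSeqLe_sign {x : L1} {n : ℕ} (hx : SuppLe x n) :
    SignSeqLe (fun k => Real.sign ((x : ℕ → ℝ) k)) n := by
  obtain ⟨s, hcard, hs⟩ := hx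
  exact ⟨fun k => Real.sign_apply_eq _, s, hcard, fun k hk => by simp [hs k hk]⟩

/-- Here `[A*η]_k = η (A e⁽ᵏ⁾)`, and `P_{supp ξ} A*η = ξ` is expressed componentwise on `supp ξ`. -/
theorem stmt8_general {Y : Type*} [NormedAddCommGroup Y] [NormedSpace ℝ Y]
    (A : L1 →L[ℝ] Y) (n : ℕ) (γ : ℝ) (hγ : 0 < γ)
    (hsource : ∀ ξ : ℕ → ℝ, SignSeqLe ξ n →
      ∃ η : StrongDual ℝ Y, ‖η‖ ≤ γ ∧ ∀ k, ξ k ≠ 0 → η (A (e k)) = ξ k) :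
    ∀ x : L1, SuppLe x n → ‖A x‖ ≥ γ⁻¹ * ‖x‖ := by
  intro x hx
  obtain ⟨η, hη, hηA⟩ := hsource _ hx.signSeqLe_sign
  have hpair : η (A x) = ‖x‖ := L1.apply_eq_norm_of_apply_e_eq_sign (η.comp A) x
    fun k hk => hηA k (Real.sign_eq_zero_iff.not.mpr hk)
  rw [ge_iff_le, inv_mul_le_iff₀ hγ]
  calc ‖x‖ = η (A x) := hpair.symm
    _ ≤ ‖η‖ * ‖A x‖ := (le_abs_self _).trans (η.le_opNorm _)
    _ ≤ γ * ‖A x‖ := by gcongr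

/-- Items (i) and (ii) of the source condition (with all index sets of cardinality ≤ n)
imply the restricted injectivity property `‖A x‖ ≥ γₙ⁻¹ ‖x‖₁` for `|supp x| ≤ n`.
Here `[A*η]_k = η (A e⁽ᵏ⁾)` and `P_{supp ξ} A*η = ξ` is expressed componentwise on `supp ξ`. -/
theorem stmt8 {Y : Type*} [NormedAddCommGroup Y] [NormedSpace ℝ Y] [CompleteSpace Y]
    (A : L1 →L[ℝ] Y) (n : ℕ) (γ : ℝ) (hγ : 0 < γ)
    (hsource : ∀ ξ : ℕ → ℝ, SignSeqLe ξ n →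
      ∃ η : StrongDual ℝ Y, ‖η‖ ≤ γ ∧ ∀ k, ξ k ≠ 0 → η (A (e k)) = ξ k) :
    ∀ x : L1, SuppLe x n → ‖A x‖ ≥ γ⁻¹ * ‖x‖ :=
  stmt8_general A n γ hγ hsource
end
end

section
/- Let A : ℓ¹(ℕ) → Y be bounded linear, Y a Banach space, and suppose for every n the restricted injectivity property ‖Ax‖ ≥ γ_n⁻¹‖x‖₁ holds for all x with |supp x| ≤ n. Then for every ξ ∈ ℓ^∞(ℕ) with |supp ξ| ≤ n and entries in {-1,0,1}, there exists η ∈ Y* with ‖η‖_{Y*} ≤ γ_n and P_{supp ξ} A* η = ξ. -/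
noncomputable section

/-!
Fix the support `s` of `ξ` and let `S c = ∑_{i ∈ s} cᵢ e⁽ⁱ⁾`. Since `|ξ| ≤ 1`, restricted
injectivity gives `|∑_{i ∈ s} ξᵢ cᵢ| ≤ ‖S c‖₁ ≤ γₙ ‖A S c‖`, so `A S c ↦ ∑ ξᵢ cᵢ` is a well-defined
functional of norm at most `γₙ` on the range of `A S`; a Hahn–Banach extension is the required `η`.
-/

theorem StrongDual.exists_comp_eq_of_norm_le {𝕜 E Y : Type*} [RCLike 𝕜] [AddCommGroup E]
    [Module 𝕜 E] [NormedAddCommGroup Y] [NormedSpace 𝕜 Y] (T : E →ₗ[𝕜] Y) (ℓ : E →ₗ[𝕜] 𝕜)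
    {C : ℝ} (hC : 0 ≤ C) (hℓ : ∀ c, ‖ℓ c‖ ≤ C * ‖T c‖) :
    ∃ η : StrongDual 𝕜 Y, ‖η‖ ≤ C ∧ ∀ c, η (T c) = ℓ c := by
  have hker : LinearMap.ker T ≤ LinearMap.ker ℓ := fun c hc ↦ by
    simpa [LinearMap.mem_ker.1 hc] using hℓ c
  let ψ : LinearMap.range T →ₗ[𝕜] 𝕜 :=
    (LinearMap.ker T).liftQ ℓ hker ∘ₗ T.quotKerEquivRange.symm.toLinearMap
  have hψ : ∀ c, ψ ⟨T c, LinearMap.mem_range_self T c⟩ = ℓ c := fun c ↦ by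
    simp [ψ, LinearMap.quotKerEquivRange_symm_apply_image]
  have hψC : ∀ w, ‖ψ w‖ ≤ C * ‖w‖ := by
    rintro ⟨_, c, rfl⟩
    simpa [hψ] using hℓ c
  obtain ⟨η, hηψ, hη⟩ := exists_extension_norm_eq _ (ψ.mkContinuous C hψC)
  refine ⟨η, hη ▸ ψ.mkContinuous_norm_le hC hψC, fun c ↦ ?_⟩
  simpa [hψ] using hηψ ⟨T c, LinearMap.mem_range_self T c⟩

lemma smul_e_eq_single (i : ℕ) (a : ℝ) : a • e i = lp.single 1 i a := by
  rw [e, ← lp.single_smul, smul_eq_mul, mul_one]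

lemma norm_sum_smul_e (s : Finset ℕ) (c : ℕ → ℝ) :
    ‖∑ i ∈ s, c i • e i‖ = ∑ i ∈ s, |c i| := by
  simpa [smul_e_eq_single] using lp.norm_sum_single (E := fun _ : ℕ => ℝ) (p := 1) (by simp) c s

lemma suppLe_sum_smul_e {s : Finset ℕ} {n : ℕ} (hs : s.card ≤ n) (c : ℕ → ℝ) :
    SuppLe (∑ i ∈ s, c i • e i) n := by
  refine ⟨s, hs, fun k hk ↦ ?_⟩
  rw [lp.coeFn_sum, Finset.sum_apply]
  refine Finset.sum_eq_zero fun i hi ↦ ?_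
  simp [smul_e_eq_single, Pi.single_eq_of_ne (ne_of_mem_of_not_mem hi hk).symm]

/-- `P_{supp ξ} A*η = ξ` is stated coordinatewise, using `[A*η]_k = η (A e⁽ᵏ⁾)`. -/
theorem stmt9_general {Y : Type*} [NormedAddCommGroup Y] [NormedSpace ℝ Y]
    (A : L1 →L[ℝ] Y) (γ : ℕ → ℝ) (hγpos : ∀ n, 0 < γ n)
    (hRIP : ∀ n, ∀ x : L1, SuppLe x n → ‖A x‖ ≥ (γ n)⁻¹ * ‖x‖) :
    ∀ n, ∀ ξ : ℕ → ℝ, SignSeqLe ξ n →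
      ∃ η : StrongDual ℝ Y, ‖η‖ ≤ γ n ∧ ∀ k, ξ k ≠ 0 → η (A (e k)) = ξ k := by
  rintro n ξ ⟨hsign, s, hcard, hs0⟩
  let S : (ℕ → ℝ) →ₗ[ℝ] L1 := ∑ i ∈ s, (LinearMap.proj i).smulRight (e i)
  let ℓ : (ℕ → ℝ) →ₗ[ℝ] ℝ := ∑ i ∈ s, ξ i • LinearMap.proj i
  have hS : ∀ c, S c = ∑ i ∈ s, c i • e i := fun c ↦ by simp [S]
  have hℓ : ∀ c, ℓ c = ∑ i ∈ s, ξ i * c i := fun c ↦ by simp [ℓ]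
  have hξ : ∀ k, |ξ k| ≤ 1 := fun k ↦ by rcases hsign k with h | h | h <;> simp [h]
  have hbound : ∀ c, ‖ℓ c‖ ≤ γ n * ‖(A.toLinearMap ∘ₗ S) c‖ := fun c ↦ calc
    ‖ℓ c‖ ≤ ∑ i ∈ s, |ξ i| * |c i| := by
      simpa [hℓ, abs_mul] using Finset.abs_sum_le_sum_abs (fun i ↦ ξ i * c i) s
    _ ≤ ∑ i ∈ s, |c i| := Finset.sum_le_sum fun i _ ↦ mul_le_of_le_one_left (abs_nonneg _) (hξ i)
    _ = ‖S c‖ := by rw [hS, norm_sum_smul_e]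
    _ ≤ γ n * ‖A (S c)‖ := by
      have := hRIP n (S c) (hS c ▸ suppLe_sum_smul_e hcard c)
      rwa [ge_iff_le, inv_mul_le_iff₀ (hγpos n)] at this
  obtain ⟨η, hη, hηℓ⟩ := StrongDual.exists_comp_eq_of_norm_le _ ℓ (hγpos n).le hbound
  refine ⟨η, hη, fun k hk ↦ ?_⟩
  have hks : k ∈ s := by_contra (hk ∘ hs0 k)
  simpa [hS, hℓ, Pi.single_apply, hks] using hηℓ (Pi.single k 1)

/-- The restricted injectivity property implies items (i) and (ii) of the source
condition: for every sign sequence `ξ` with at most `n` nonzero entries there is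
`η ∈ Y*` with `‖η‖ ≤ γₙ` and `P_{supp ξ} A*η = ξ`, where `[A*η]_k = η (A e⁽ᵏ⁾)`. -/
theorem stmt9 {Y : Type*} [NormedAddCommGroup Y] [NormedSpace ℝ Y] [CompleteSpace Y]
    (A : L1 →L[ℝ] Y) (γ : ℕ → ℝ) (hγpos : ∀ n, 0 < γ n)
    (hRIP : ∀ n, ∀ x : L1, SuppLe x n → ‖A x‖ ≥ (γ n)⁻¹ * ‖x‖) :
    ∀ n, ∀ ξ : ℕ → ℝ, SignSeqLe ξ n →
      ∃ η : StrongDual ℝ Y, ‖η‖ ≤ γ n ∧ ∀ k, ξ k ≠ 0 → η (A (e k)) = ξ k :=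
  stmt9_general A γ hγpos hRIP
end
end

section
/- Let X be a normed space, Y a normed space, B : X → Y bounded linear, γ > 0, and ξ ∈ X* with |⟨ξ, x⟩| ≤ γ‖Bx‖ for all x ∈ X. Then there exists η ∈ Y* with ‖η‖ ≤ γ and ξ = B* η. -/
/-!
The bound forces `ker B ≤ ker ξ`, so `ξ` factors through `B` as a linear functional on the
range of `B`, bounded there by `γ‖·‖`. Hahn–Banach extends it to all of `Y` without increasing
its norm.
-/

namespace LinearMap

variable {R M M₂ M₃ : Type*} [Ring R] [AddCommGroup M] [AddCommGroup M₂] [AddCommGroup M₃]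
  [Module R M] [Module R M₂] [Module R M₃]

theorem exists_comp_rangeRestrict_eq_of_ker_le {f : M →ₗ[R] M₂} {g : M →ₗ[R] M₃}
    (hfg : ker f ≤ ker g) : ∃ h : range f →ₗ[R] M₃, h ∘ₗ f.rangeRestrict = g :=
  ⟨(ker f).liftQ g hfg ∘ₗ f.quotKerEquivRange.symm.toLinearMap, by
    ext x
    change (ker f).liftQ g hfg (f.quotKerEquivRange.symm ⟨f x, mem_range_self f x⟩) = g x
    rw [quotKerEquivRange_symm_apply_image]
    rfl⟩

theorem ker_le_ker_of_norm_le {F G : Type*} [NormedAddCommGroup F] [NormedAddCommGroup G]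
    [Module R F] [Module R G]
    {f : M →ₗ[R] F} {g : M →ₗ[R] G} {C : ℝ} (hfg : ∀ x, ‖g x‖ ≤ C * ‖f x‖) :
    ker f ≤ ker g := by
  intro x hx
  have := hfg x
  rw [mem_ker.1 hx, norm_zero, mul_zero] at this
  exact mem_ker.2 (norm_le_zero_iff.1 this)

end LinearMap

theorem exists_strongDual_comp_eq_of_norm_le {𝕜 E F : Type*} [RCLike 𝕜]
    [AddCommGroup E] [Module 𝕜 E] [NormedAddCommGroup F] [NormedSpace 𝕜 F]
    (B : E →ₗ[𝕜] F) (ξ : E →ₗ[𝕜] 𝕜) {C : ℝ} (hC : 0 ≤ C) (h : ∀ x, ‖ξ x‖ ≤ C * ‖B x‖) :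
    ∃ η : StrongDual 𝕜 F, ‖η‖ ≤ C ∧ ∀ x, ξ x = η (B x) := by
  obtain ⟨g, hg⟩ := LinearMap.exists_comp_rangeRestrict_eq_of_ker_le
    (LinearMap.ker_le_ker_of_norm_le h)
  have hg_apply (x : E) : g (B.rangeRestrict x) = ξ x := congr($hg x)
  have hg_bound : ∀ y, ‖g y‖ ≤ C * ‖y‖ := by
    rintro ⟨_, x, rfl⟩
    exact (hg_apply x).symm ▸ h x
  obtain ⟨η, hη_ext, hη_norm⟩ := exists_extension_norm_eq _ (g.mkContinuous C hg_bound)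
  refine ⟨η, hη_norm ▸ g.mkContinuous_norm_le hC hg_bound, fun x => ?_⟩
  rw [← hg_apply]
  exact (hη_ext _).symm

/-- If `|⟨ξ, x⟩| ≤ γ ‖B x‖` for all `x`, then `ξ = B* η` for some `η ∈ Y*` with
`‖η‖ ≤ γ` (a Hahn–Banach consequence). -/
theorem stmt10 {X Y : Type*} [NormedAddCommGroup X] [NormedSpace ℝ X]
    [NormedAddCommGroup Y] [NormedSpace ℝ Y]
    (B : X →L[ℝ] Y) (γ : ℝ) (hγ : 0 < γ) (ξ : StrongDual ℝ X)
    (h : ∀ x : X, |ξ x| ≤ γ * ‖B x‖) :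
    ∃ η : StrongDual ℝ Y, ‖η‖ ≤ γ ∧ ∀ x : X, ξ x = η (B x) :=
  exists_strongDual_comp_eq_of_norm_le (B : X →ₗ[ℝ] Y) (ξ : X →ₗ[ℝ] ℝ) hγ.le h
end

section
/- Let A : ℓ¹(ℕ) → Y be a bounded linear operator, x† ∈ ℓ¹(ℕ), M ⊆ ℕ a finite index set, c ∈ [0,1), and η ∈ Y* with ‖η‖ ≤ γ, P_S A*η = ξ and ‖(I − P_S) A*η‖_∞ ≤ c, where ξ = P_M sgn(x − x†) and S = supp ξ. Then for all x ∈ ℓ¹(ℕ): ‖P_M(x − x†)‖₁ ≤ c(‖(I − P_M)x‖₁ + ‖(I − P_M)x†‖₁) + γ‖Ax − Ax†‖_Y. -/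
noncomputable section

/-- `‖P_M x‖₁ = ∑_{k ∈ M} |x_k|`, the ℓ¹-norm of the projection of `x` onto the
index set `M`. -/
def norm1On (M : Set ℕ) (x : L1) : ℝ :=
  ∑' k, M.indicator (fun k => |(x : ℕ → ℝ) k|) k

/-!
Pair `x - x†` with `A*η`. Expanding in the unit vectors, `η (A (x - x†)) = ∑ₖ (x - x†)ₖ [A*η]ₖ`.
On `M` the summand is `(x - x†)ₖ sgn (x - x†)ₖ = |(x - x†)ₖ|`, since `[A*η]ₖ = ξₖ` wherever
`ξₖ ≠ 0`; off `M` it is at least `-c |(x - x†)ₖ|`. Hence `‖P_M(x - x†)‖₁` is at most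
`c ‖(I - P_M)(x - x†)‖₁ + η (A (x - x†))`, and the triangle inequality together with
`η (A x - A x†) ≤ ‖η‖ ‖A x - A x†‖` finishes the estimate.
-/

theorem Real.sign_mul_self_eq_abs (r : ℝ) : Real.sign r * r = |r| := by
  rcases lt_trichotomy r 0 with hr | rfl | hr
  · rw [Real.sign_of_neg hr, abs_of_neg hr, neg_one_mul]
  · simp
  · rw [Real.sign_of_pos hr, abs_of_pos hr, one_mul]

namespace L1

theorem summable_abs (x : L1) : Summable fun k => |(x : ℕ → ℝ) k| := by
  simpa using (lp.memℓp x).summable (by norm_num)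

theorem hasSum_mul_apply_e_s11 (f : L1 →L[ℝ] ℝ) (x : L1) :
    HasSum (fun k => (x : ℕ → ℝ) k * f (e k)) (f x) := by
  convert f.hasSum (lp.hasSum_single ENNReal.one_ne_top x) using 2 with k
  rw [e, ← smul_eq_mul, ← f.map_smul, ← lp.single_smul, smul_eq_mul, mul_one]

end L1

theorem norm1On_eq_tsum_subtype (S : Set ℕ) (x : L1) :
    norm1On S x = ∑' k : S, |(x : ℕ → ℝ) k| :=
  (tsum_subtype S _).symm

theorem norm1On_sub_le (S : Set ℕ) (x y : L1) :
    norm1On S (x - y) ≤ norm1On S x + norm1On S y := by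
  simp only [norm1On_eq_tsum_subtype]
  have hx := (L1.summable_abs x).subtype S
  have hy := (L1.summable_abs y).subtype S
  calc ∑' k : S, |((x - y : L1) : ℕ → ℝ) k| ≤ ∑' k : S, (|(x : ℕ → ℝ) k| + |(y : ℕ → ℝ) k|) :=
        ((L1.summable_abs _).subtype S).tsum_le_tsum (fun k => by simpa using abs_sub _ _)
          (hx.add hy)
    _ = _ := hx.tsum_add hy

theorem norm1On_le_of_hasSum_mul {S : Set ℕ} {z : L1} {φ : ℕ → ℝ} {c s : ℝ}
    (hs : HasSum (fun k => (z : ℕ → ℝ) k * φ k) s)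
    (hS : ∀ k ∈ S, (z : ℕ → ℝ) k * φ k = |(z : ℕ → ℝ) k|)
    (hSc : ∀ k ∉ S, |φ k| ≤ c) :
    norm1On S z ≤ c * norm1On Sᶜ z + s := by
  have hg := hs.summable
  have hlower : -(c * ∑' k : (Sᶜ : Set ℕ), |(z : ℕ → ℝ) k|) ≤
      ∑' k : (Sᶜ : Set ℕ), (z : ℕ → ℝ) k * φ k := by
    rw [← tsum_mul_left, ← tsum_neg]
    refine (((L1.summable_abs z).subtype _).mul_left c).neg.tsum_le_tsum (fun k => ?_)
      (hg.subtype _)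
    calc -(c * |(z : ℕ → ℝ) k|) ≤ -|(z : ℕ → ℝ) k * φ k| := by
          rw [abs_mul, mul_comm]
          exact neg_le_neg (mul_le_mul_of_nonneg_left (hSc k k.2) (abs_nonneg _))
      _ ≤ _ := neg_abs_le _
  calc norm1On S z = ∑' k : S, (z : ℕ → ℝ) k * φ k := by
        rw [norm1On_eq_tsum_subtype]
        exact tsum_congr fun k => (hS k k.2).symm
    _ = s - ∑' k : (Sᶜ : Set ℕ), (z : ℕ → ℝ) k * φ k := by
        rw [← hs.tsum_eq, ← (hg.subtype S).tsum_add_tsum_compl (hg.subtype Sᶜ)]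
        ring
    _ ≤ c * norm1On Sᶜ z + s := by
        rw [norm1On_eq_tsum_subtype]
        linarith

theorem stmt11_general {Y : Type*} [NormedAddCommGroup Y] [NormedSpace ℝ Y]
    (A : L1 →L[ℝ] Y) (x xdag : L1) (M : Finset ℕ)
    (c : ℝ) (hc0 : 0 ≤ c) (γ : ℝ)
    (ξ : ℕ → ℝ)
    (hξ : ∀ k, ξ k = if k ∈ M then Real.sign ((x : ℕ → ℝ) k - (xdag : ℕ → ℝ) k) else 0)
    (η : StrongDual ℝ Y) (hηnorm : ‖η‖ ≤ γ)
    (hηsupp : ∀ k, ξ k ≠ 0 → η (A (e k)) = ξ k)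
    (hηout : ∀ k, ξ k = 0 → |η (A (e k))| ≤ c) :
    norm1On (↑M) (x - xdag) ≤
      c * (norm1On (↑M)ᶜ x + norm1On (↑M)ᶜ xdag) + γ * ‖A x - A xdag‖ := by
  set z := x - xdag
  have hOnM : ∀ k ∈ (M : Set ℕ), (z : ℕ → ℝ) k * η (A (e k)) = |(z : ℕ → ℝ) k| := by
    intro k hk
    have hξk : ξ k = Real.sign ((z : ℕ → ℝ) k) := by simp [z, hξ, Finset.mem_coe.mp hk]
    by_cases hz : (z : ℕ → ℝ) k = 0
    · simp [hz]
    · rw [hηsupp k (by rwa [hξk, Ne, Real.sign_eq_zero_iff]), hξk, mul_comm,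
        Real.sign_mul_self_eq_abs]
  have hOffM : ∀ k ∉ (M : Set ℕ), |η (A (e k))| ≤ c :=
    fun k hk => hηout k (by simp [hξ, show k ∉ M from hk])
  have hpair : η (A z) ≤ γ * ‖A x - A xdag‖ := by
    rw [map_sub]
    exact (Real.le_norm_self _).trans (η.le_of_opNorm_le hηnorm _)
  calc norm1On M z ≤ c * norm1On (↑M)ᶜ z + η (A z) :=
        norm1On_le_of_hasSum_mul (L1.hasSum_mul_apply_e_s11 (η.comp A) z) hOnM hOffM
    _ ≤ c * (norm1On (↑M)ᶜ x + norm1On (↑M)ᶜ xdag) + γ * ‖A x - A xdag‖ := by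
        gcongr
        exact norm1On_sub_le _ x xdag

/-- The key estimate: if `ξ = P_M sgn(x - x†)` and `η ∈ Y*` satisfies `‖η‖ ≤ γ`,
`P_{supp ξ} A*η = ξ` and `‖(I - P_{supp ξ}) A*η‖_∞ ≤ c` (componentwise, with
`[A*η]_k = η (A e⁽ᵏ⁾)`), then
`‖P_M(x - x†)‖₁ ≤ c (‖(I-P_M)x‖₁ + ‖(I-P_M)x†‖₁) + γ ‖Ax - Ax†‖`. -/
theorem stmt11 {Y : Type*} [NormedAddCommGroup Y] [NormedSpace ℝ Y]
    (A : L1 →L[ℝ] Y) (x xdag : L1) (M : Finset ℕ)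
    (c : ℝ) (hc0 : 0 ≤ c) (hc1 : c < 1) (γ : ℝ) (hγ : 0 < γ)
    (ξ : ℕ → ℝ)
    (hξ : ∀ k, ξ k = if k ∈ M then Real.sign ((x : ℕ → ℝ) k - (xdag : ℕ → ℝ) k) else 0)
    (η : StrongDual ℝ Y) (hηnorm : ‖η‖ ≤ γ)
    (hηsupp : ∀ k, ξ k ≠ 0 → η (A (e k)) = ξ k)
    (hηout : ∀ k, ξ k = 0 → |η (A (e k))| ≤ c) :
    norm1On (↑M) (x - xdag) ≤
      c * (norm1On (↑M)ᶜ x + norm1On (↑M)ᶜ xdag) + γ * ‖A x - A xdag‖ :=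
  stmt11_general A x xdag M c hc0 γ ξ hξ η hηnorm hηsupp hηout
end
end

section
/- Let x, x† ∈ ℓ¹(ℕ), M ⊆ ℕ, and β ∈ (0,1] with c = (1−β)/(1+β). If ‖P_M(x − x†)‖₁ ≤ c(‖(I−P_M)x‖₁ + ‖(I−P_M)x†‖₁) + γ‖Ax − Ax†‖_Y, then β‖x − x†‖₁ − ‖x‖₁ + ‖x†‖₁ ≤ 2‖(I−P_M)x†‖₁ + (2/(1+c)) γ ‖Ax − Ax†‖_Y. -/
noncomputable section

lemma summable_abs' (x : L1) : Summable fun k => |(x : ℕ → ℝ) k| := by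
  have h := lp.memℓp x
  rw [memℓp_gen_iff (by norm_num)] at h
  simpa using h

lemma summable_ind (M : Set ℕ) (x : L1) :
    Summable (M.indicator fun k => |(x : ℕ → ℝ) k|) :=
  (summable_abs' x).indicator M

lemma norm1On_nonneg (M : Set ℕ) (x : L1) : 0 ≤ norm1On M x :=
  tsum_nonneg fun k => Set.indicator_nonneg (fun k _ => abs_nonneg _) k

lemma norm1On_split (M : Set ℕ) (x : L1) :
    norm1On M x + norm1On Mᶜ x = ‖x‖ := by
  have hn : ‖x‖ = ∑' k, |(x : ℕ → ℝ) k| := by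
    rw [lp.norm_eq_tsum_rpow (by norm_num) x]
    simp [Real.norm_eq_abs]
  rw [hn, norm1On, norm1On, ← Summable.tsum_add (summable_ind M x) (summable_ind Mᶜ x)]
  congr 1
  ext k
  exact Set.indicator_self_add_compl_apply M _ k

lemma norm1On_triangle (M : Set ℕ) (x y : L1) :
    norm1On M (x + y) ≤ norm1On M x + norm1On M y := by
  rw [norm1On, norm1On, norm1On, ← Summable.tsum_add (summable_ind M x) (summable_ind M y)]
  refine Summable.tsum_le_tsum (fun k => ?_) (summable_ind M (x + y))
    ((summable_ind M x).add (summable_ind M y))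
  by_cases h : k ∈ M
  · simp only [Set.indicator_of_mem h, lp.coeFn_add, Pi.add_apply]
    exact abs_add_le _ _
  · simp [Set.indicator_of_notMem h]

lemma norm1On_neg (M : Set ℕ) (x : L1) : norm1On M (-x) = norm1On M x := by
  unfold norm1On
  congr 1; ext k
  by_cases h : k ∈ M <;> simp [Set.indicator_of_mem, Set.indicator_of_notMem, h]

/-- From the key estimate
`‖P_M(x - x†)‖₁ ≤ c (‖(I-P_M)x‖₁ + ‖(I-P_M)x†‖₁) + γ ‖Ax - Ax†‖`
with `β ∈ (0,1]` and `c = (1-β)/(1+β)`, one derives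
`β ‖x - x†‖₁ - ‖x‖₁ + ‖x†‖₁ ≤ 2 ‖(I-P_M)x†‖₁ + (2/(1+c)) γ ‖Ax - Ax†‖`. -/
theorem stmt12 {Y : Type*} [NormedAddCommGroup Y] [NormedSpace ℝ Y]
    (A : L1 →L[ℝ] Y) (x xdag : L1) (M : Set ℕ)
    (β : ℝ) (hβ0 : 0 < β) (hβ1 : β ≤ 1) (c : ℝ) (hcβ : c = (1 - β) / (1 + β))
    (γ : ℝ) (hγ : 0 ≤ γ)
    (hkey : norm1On M (x - xdag) ≤
      c * (norm1On Mᶜ x + norm1On Mᶜ xdag) + γ * ‖A x - A xdag‖) :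
    β * ‖x - xdag‖ - ‖x‖ + ‖xdag‖ ≤
      2 * norm1On Mᶜ xdag + (2 / (1 + c)) * γ * ‖A x - A xdag‖ := by
  have hβ1' : (0:ℝ) < 1 + β := by linarith
  have hc : c = (1 - β) / (1 + β) := hcβ
  have hc1 : (1 + β) * c = 1 - β := by rw [hc]; field_simp
  have hc2 : 1 + c = 2 / (1 + β) := by rw [hc]; field_simp; ring
  have hc2' : 2 / (1 + c) = 1 + β := by
    rw [hc2]; rw [div_div_eq_mul_div]; field_simp
  -- splittings
  have hz := norm1On_split M (x - xdag)
  have hx := norm1On_split M x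
  have hxd := norm1On_split M xdag
  -- triangle: norm1On M xdag ≤ norm1On M x + norm1On M (x - xdag)
  have ht1 : norm1On M xdag ≤ norm1On M x + norm1On M (x - xdag) := by
    have := norm1On_triangle M x (xdag - x)
    have h2 : x + (xdag - x) = xdag := by abel
    rw [h2] at this
    have h3 : norm1On M (xdag - x) = norm1On M (x - xdag) := by
      rw [← norm1On_neg M (xdag - x)]; congr 1; abel
    linarith
  -- triangle: norm1On Mᶜ (x - xdag) ≤ norm1On Mᶜ x + norm1On Mᶜ xdag
  have ht2 : norm1On Mᶜ (x - xdag) ≤ norm1On Mᶜ x + norm1On Mᶜ xdag := by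
    have := norm1On_triangle Mᶜ x (-xdag)
    have h2 : x + -xdag = x - xdag := by abel
    rw [h2, norm1On_neg] at this
    exact this
  have hne : 0 ≤ norm1On Mᶜ x := norm1On_nonneg _ _
  have hga : 0 ≤ γ * ‖A x - A xdag‖ := mul_nonneg hγ (norm_nonneg _)
  -- key multiplied by (1+β)
  have hkey' : (1 + β) * norm1On M (x - xdag) ≤
      (1 - β) * (norm1On Mᶜ x + norm1On Mᶜ xdag)
        + (1 + β) * (γ * ‖A x - A xdag‖) := by
    have := mul_le_mul_of_nonneg_left hkey (le_of_lt hβ1')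
    calc (1 + β) * norm1On M (x - xdag)
        ≤ (1 + β) * (c * (norm1On Mᶜ x + norm1On Mᶜ xdag) + γ * ‖A x - A xdag‖) := this
      _ = ((1 + β) * c) * (norm1On Mᶜ x + norm1On Mᶜ xdag)
            + (1 + β) * (γ * ‖A x - A xdag‖) := by ring
      _ = _ := by rw [hc1]
  rw [hc2']
  nlinarith [hz, hx, hxd, ht1, ht2, hkey', norm1On_nonneg Mᶜ xdag]
end
end

section
/- Let (c_n) be a nonnegative sequence with c_n → 0 and (γ_n) positive with γ_k < inf_{l>k} γ_l for some k. Then the concave function φ(t) = 2 inf_n (c_n + a γ_n t) (with a > 0 fixed) is strictly increasing on [0,∞). -/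
open Filter

noncomputable section

/-- If `c_n ≥ 0`, `c_n → 0`, `γ_n > 0` and `γ_k < inf_{l > k} γ_l` for some `k`,
then the concave function `φ(t) = 2 inf_n (c_n + a γ_n t)` (with `a > 0`) is
strictly increasing on `[0,∞)`. -/
theorem stmt15 (c : ℕ → ℝ) (hc0 : ∀ n, 0 ≤ c n)
    (hclim : Tendsto c atTop (nhds 0))
    (γ : ℕ → ℝ) (hγpos : ∀ n, 0 < γ n)
    (hgap : ∃ k : ℕ, γ k < ⨅ l : {l : ℕ // k < l}, γ (l : ℕ))
    (a : ℝ) (ha : 0 < a) :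
    StrictMonoOn (fun t : ℝ => ⨅ n : ℕ, 2 * (c n + a * γ n * t)) (Set.Ici 0) := by
  obtain ⟨k, hk⟩ := hgap
  have hbdd : BddBelow (Set.range fun l : {l : ℕ // k < l} => γ (l : ℕ)) :=
    ⟨0, by rintro x ⟨l, rfl⟩; exact (hγpos _).le⟩
  have hγsle : ∀ n, k < n → (⨅ l : {l : ℕ // k < l}, γ (l : ℕ)) ≤ γ n :=
    fun n hn => ciInf_le hbdd ⟨n, hn⟩
  obtain ⟨ε, hε, hεle⟩ : ∃ ε > 0, ∀ n, ε ≤ γ n := by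
    refine ⟨min (⨅ l : {l : ℕ // k < l}, γ (l : ℕ))
      ((Finset.range (k+1)).inf' ⟨0, by simp⟩ γ), lt_min ((hγpos k).trans hk) ?_, ?_⟩
    · exact (Finset.lt_inf'_iff _).mpr fun n _ => hγpos n
    · intro n
      rcases le_or_gt n k with h | h
      · exact le_trans (min_le_right _ _)
          (Finset.inf'_le _ (by simp [Nat.lt_succ_iff, h]))
      · exact le_trans (min_le_left _ _) (hγsle n h)
  intro s hs t ht hst
  simp only [Set.mem_Ici] at hs ht
  have hbdd2 : ∀ u : ℝ, 0 ≤ u →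
      BddBelow (Set.range fun n : ℕ => 2 * (c n + a * γ n * u)) := by
    intro u hu
    refine ⟨0, ?_⟩
    rintro x ⟨n, rfl⟩
    show 0 ≤ 2 * (c n + a * γ n * u)
    have h := mul_nonneg (mul_nonneg ha.le (hγpos n).le) hu
    nlinarith [hc0 n]
  have key : (⨅ n, 2 * (c n + a * γ n * s)) + 2 * a * ε * (t - s)
      ≤ ⨅ n, 2 * (c n + a * γ n * t) := by
    apply le_ciInf
    intro n
    have h1 : (⨅ m, 2 * (c m + a * γ m * s)) ≤ 2 * (c n + a * γ n * s) :=
      ciInf_le (hbdd2 s hs) n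
    have h2 : 2 * a * ε * (t - s) ≤ 2 * a * γ n * (t - s) := by
      have h3 := mul_le_mul_of_nonneg_right (hεle n) (by linarith : (0:ℝ) ≤ t - s)
      nlinarith
    nlinarith
  have hpos : 0 < 2 * a * ε * (t - s) := by
    have : 0 < t - s := by linarith
    positivity
  simp only
  linarith
end
end

section
/- Let n ∈ ℕ and suppose for each k ∈ {1,…,n} there are f⁽ⁿ'ᵏ⁾ ∈ Y* with [A*f⁽ⁿ'ᵏ⁾]_l = δ_{kl} for l ∈ {1,…,n} and ∑_{k=1}^n |[A*f⁽ⁿ'ᵏ⁾]_l| ≤ c for all l > n, with c ∈ [0,1). Then for every sign sequence ξ supported in {1,…,n}, the element η = ∑_{k∈supp ξ} ξ_k f⁽ⁿ'ᵏ⁾ satisfies P_{supp ξ}A*η = ξ, ‖(I − P_{supp ξ})A*η‖_∞ ≤ c, and ‖η‖_{Y*} ≤ ∑_{k=1}^n ‖f⁽ⁿ'ᵏ⁾‖_{Y*}. -/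
noncomputable section

def SignIn (ξ : ℕ → ℝ) (M : Finset ℕ) : Prop :=
  (∀ k, ξ k = -1 ∨ ξ k = 0 ∨ ξ k = 1) ∧ ∀ k ∉ M, ξ k = 0

open Finset

lemma SignIn.abs_le_one {ξ : ℕ → ℝ} {M : Finset ℕ} (hξ : SignIn ξ M) (k : ℕ) : |ξ k| ≤ 1 := by
  rcases hξ.1 k with h | h | h <;> simp [h]

lemma SignIn.mem_of_ne_zero {ξ : ℕ → ℝ} {M : Finset ℕ} (hξ : SignIn ξ M) {k : ℕ}
    (hk : ξ k ≠ 0) : k ∈ M :=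
  not_imp_comm.1 (hξ.2 k) hk

lemma norm_sum_smul_le_sum_norm_of_subset {𝕜 E ι : Type*} [NormedField 𝕜]
    [SeminormedAddCommGroup E] [NormedSpace 𝕜 E] {S T : Finset ι} (hST : S ⊆ T)
    (w : ι → 𝕜) (g : ι → E) (hw : ∀ i ∈ S, ‖w i‖ ≤ 1) :
    ‖∑ i ∈ S, w i • g i‖ ≤ ∑ i ∈ T, ‖g i‖ :=
  calc ‖∑ i ∈ S, w i • g i‖ ≤ ∑ i ∈ S, ‖w i • g i‖ := norm_sum_le _ _
    _ ≤ ∑ i ∈ S, ‖g i‖ := sum_le_sum fun i hi => by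
        rw [norm_smul]; exact mul_le_of_le_one_left (norm_nonneg _) (hw i hi)
    _ ≤ ∑ i ∈ T, ‖g i‖ := sum_le_sum_of_subset_of_nonneg hST fun _ _ _ => norm_nonneg _

lemma sum_smul_apply_of_biorthogonal {𝕜 Y ι : Type*} [NormedField 𝕜]
    [SeminormedAddCommGroup Y] [NormedSpace 𝕜 Y] [DecidableEq ι]
    {f : ι → StrongDual 𝕜 Y} {x : ι → Y} {S T : Finset ι}
    (hδ : ∀ k ∈ T, ∀ l ∈ T, f k (x l) = if l = k then 1 else 0) (hST : S ⊆ T)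
    (w : ι → 𝕜) {j : ι} (hj : j ∈ T) :
    (∑ k ∈ S, w k • f k) (x j) = if j ∈ S then w j else 0 := by
  rw [_root_.sum_apply]
  calc ∑ k ∈ S, (w k • f k) (x j) = ∑ k ∈ S, if j = k then w k else 0 :=
        sum_congr rfl fun k hk => by simp [hδ k (hST hk) j hj]
    _ = if j ∈ S then w j else 0 := sum_ite_eq S j w

open Classical in
theorem stmt18_general {Y : Type*} [NormedAddCommGroup Y] [NormedSpace ℝ Y]
    (A : L1 →L[ℝ] Y) (n : ℕ) (c : ℝ) (hc0 : 0 ≤ c)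
    (f : ℕ → StrongDual ℝ Y)
    (hdelta : ∀ k ∈ Finset.range n, ∀ l ∈ Finset.range n,
      f k (A (e l)) = if l = k then 1 else 0)
    (htail : ∀ l : ℕ, n ≤ l → ∑ k ∈ Finset.range n, |f k (A (e l))| ≤ c)
    (ξ : ℕ → ℝ) (hξ : SignIn ξ (Finset.range n)) :
    (∀ j, ξ j ≠ 0 → ((Finset.range n).filter (fun k => ξ k ≠ 0)).sum
        (fun k => ξ k • f k) (A (e j)) = ξ j) ∧
    (∀ j, ξ j = 0 → |((Finset.range n).filter (fun k => ξ k ≠ 0)).sum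
        (fun k => ξ k • f k) (A (e j))| ≤ c) ∧
    ‖((Finset.range n).filter (fun k => ξ k ≠ 0)).sum (fun k => ξ k • f k)‖ ≤
        ∑ k ∈ Finset.range n, ‖f k‖ := by
  set S := (range n).filter (fun k => ξ k ≠ 0)
  have hS : S ⊆ range n := filter_subset _ _
  have hw : ∀ k ∈ S, ‖ξ k‖ ≤ 1 := fun k _ => hξ.abs_le_one k
  refine ⟨fun j hj => ?_, fun j hj => ?_, norm_sum_smul_le_sum_norm_of_subset hS ξ f hw⟩
  · have hjn := hξ.mem_of_ne_zero hj
    rw [sum_smul_apply_of_biorthogonal hdelta hS ξ hjn, if_pos (mem_filter.2 ⟨hjn, hj⟩)]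
  · by_cases hjn : j ∈ range n
    · rw [sum_smul_apply_of_biorthogonal hdelta hS ξ hjn,
        if_neg fun hjS : j ∈ S => (mem_filter.1 hjS).2 hj, abs_zero]
      exact hc0
    · rw [_root_.sum_apply]
      calc |∑ k ∈ S, ξ k • f k (A (e j))| ≤ ∑ k ∈ range n, |f k (A (e j))| :=
            norm_sum_smul_le_sum_norm_of_subset hS ξ (fun k => f k (A (e j))) hw
        _ ≤ c := htail j (by simpa using hjn)

open Classical in
/-- Nonsmooth-basis case: if `[A* f⁽ⁿ'ᵏ⁾]_l = δ_{kl}` for `k, l ∈ {0,…,n-1}` and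
`∑_{k<n} |[A* f⁽ⁿ'ᵏ⁾]_l| ≤ c` for `l ≥ n` with `c ∈ [0,1)`, then for every sign
sequence `ξ` supported in `{0,…,n-1}` the element `η = ∑_{k ∈ supp ξ} ξ_k f⁽ⁿ'ᵏ⁾`
satisfies `P_{supp ξ} A*η = ξ`, `‖(I - P_{supp ξ}) A*η‖_∞ ≤ c`, and
`‖η‖ ≤ ∑_{k<n} ‖f⁽ⁿ'ᵏ⁾‖`. -/
theorem stmt18 {Y : Type*} [NormedAddCommGroup Y] [NormedSpace ℝ Y]
    (A : L1 →L[ℝ] Y) (n : ℕ) (c : ℝ) (hc0 : 0 ≤ c) (hc1 : c < 1)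
    (f : ℕ → StrongDual ℝ Y)
    (hdelta : ∀ k ∈ Finset.range n, ∀ l ∈ Finset.range n,
      f k (A (e l)) = if l = k then 1 else 0)
    (htail : ∀ l : ℕ, n ≤ l → ∑ k ∈ Finset.range n, |f k (A (e l))| ≤ c)
    (ξ : ℕ → ℝ) (hξ : SignIn ξ (Finset.range n)) :
    (∀ j, ξ j ≠ 0 → ((Finset.range n).filter (fun k => ξ k ≠ 0)).sum
        (fun k => ξ k • f k) (A (e j)) = ξ j) ∧
    (∀ j, ξ j = 0 → |((Finset.range n).filter (fun k => ξ k ≠ 0)).sum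
        (fun k => ξ k • f k) (A (e j))| ≤ c) ∧
    ‖((Finset.range n).filter (fun k => ξ k ≠ 0)).sum (fun k => ξ k • f k)‖ ≤
        ∑ k ∈ Finset.range n, ‖f k‖ :=
  stmt18_general A n c hc0 f hdelta htail ξ hξ
end
end
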